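/- arXiv:2205.15292 — 2 statements merged into one kernel-verified Lean document; each statement's English description precedes it below -/
import Mathlib

section
/- Suppose L is additionally linearly ordered. Let S = (R_i)_{i∈I} and S' = (R'_i)_{i∈I} be two families of fuzzy relations on U indexed by the same set I, and let X be a fuzzy relation on U. Then for each k ∈ {1,2,3}: (a) if SD_k(S)(X) < (S ≈ S') then SD_k(S')(X) = SD_k(S)(X); (b) if SD_k(S)(X) ≥ (S ≈ S') then SD_k(S')(X) ≥ (S ≈ S'). -/
open scoped symmDiff

/- L is a linearly ordered complete Heyting algebra, i.e. a complete linear order,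
regarded as a complete residuated lattice with ⊗ = ⊓, residuum the Heyting
implication ⇨, biresiduum ⇔ (`bihimp`), and top element as the unit 1. -/
variable {L : Type*} [CompleteLinearOrder L] {U : Type*}

/-- Composition of fuzzy relations: (R ∘ P)(u,v) = ⨆ w, R(u,w) ⊓ P(w,v). -/
def fcomp (R P : U → U → L) : U → U → L := fun u v => ⨆ w, R u w ⊓ P w v

/-- Inclusion degree of fuzzy relations: R ≲ Q. -/
def incl (R Q : U → U → L) : L := ⨅ u, ⨅ v, R u v ⇨ Q u v

/-- Equality degree of fuzzy relations: R ≈ Q. -/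
def eqd (R Q : U → U → L) : L := ⨅ u, ⨅ v, R u v ⇔ Q u v

/-- SD_1(S)(X) = ⨅ i, ((X ∘ R_i) ≲ (R_i ∘ X)). -/
def SD1 {I : Type*} (S : I → U → U → L) (X : U → U → L) : L :=
  ⨅ i, incl (fcomp X (S i)) (fcomp (S i) X)

/-- SD_2(S)(X) = ⨅ i, ((R_i ∘ X) ≲ (X ∘ R_i)). -/
def SD2 {I : Type*} (S : I → U → U → L) (X : U → U → L) : L :=
  ⨅ i, incl (fcomp (S i) X) (fcomp X (S i))

/-- SD_3(S)(X) = SD_1(S)(X) ⊓ SD_2(S)(X). -/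
def SD3 {I : Type*} (S : I → U → U → L) (X : U → U → L) : L :=
  SD1 S X ⊓ SD2 S X

/-- Degree of equality of two families of fuzzy relations: (S ≈ S') = ⨅ i, (R_i ≈ R'_i). -/
def famEq {I : Type*} (S S' : I → U → U → L) : L := ⨅ i, eqd (S i) (S' i)

lemma eqd_symm' (R R' : U → U → L) : eqd R R' = eqd R' R := by
  unfold eqd; simp [bihimp_comm]

lemma eqd_inf_le (R R' : U → U → L) (u v : U) : eqd R R' ⊓ R u v ≤ R' u v := by
  have h : eqd R R' ≤ R u v ⇨ R' u v :=
    le_trans (iInf₂_le u v) (by rw [bihimp]; exact inf_le_right)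
  exact le_trans (inf_le_inf_right _ h) (by rw [inf_comm]; exact inf_himp_le)

lemma comp_right_mono' (X R R' : U → U → L) (u v : U) :
    eqd R R' ⊓ fcomp X R u v ≤ fcomp X R' u v := by
  unfold fcomp
  rw [inf_iSup_eq]
  refine iSup_le fun w => le_trans ?_ (le_iSup _ w)
  calc eqd R R' ⊓ (X u w ⊓ R w v) ≤ X u w ⊓ (eqd R R' ⊓ R w v) := by
        rw [inf_left_comm]
    _ ≤ X u w ⊓ R' w v := inf_le_inf_left _ (eqd_inf_le R R' w v)

lemma comp_left_mono' (X R R' : U → U → L) (u v : U) :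
    eqd R R' ⊓ fcomp R X u v ≤ fcomp R' X u v := by
  unfold fcomp
  rw [inf_iSup_eq]
  refine iSup_le fun w => le_trans ?_ (le_iSup _ w)
  calc eqd R R' ⊓ (R u w ⊓ X w v) ≤ (eqd R R' ⊓ R u w) ⊓ X w v := by
        rw [inf_assoc]
    _ ≤ R' u w ⊓ X w v := inf_le_inf_right _ (eqd_inf_le R R' u w)

lemma famEq_le_eqd {I : Type*} (S S' : I → U → U → L) (i : I) :
    famEq S S' ≤ eqd (S i) (S' i) := iInf_le _ i

lemma incl_inf_le (R Q : U → U → L) (u v : U) : incl R Q ⊓ R u v ≤ Q u v := by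
  have h : incl R Q ≤ R u v ⇨ Q u v := le_trans (iInf₂_le u v) le_rfl
  exact le_trans (inf_le_inf_right _ h) (by rw [inf_comm]; exact inf_himp_le)

lemma key_gen {I : Type*} (S S' : I → U → U → L) (X : U → U → L)
    (d : L) (hd : ∀ i u v, d ⊓ fcomp X (S i) u v ≤ fcomp (S i) X u v) (i : I) (u v : U) :
    famEq S S' ⊓ d ⊓ fcomp X (S' i) u v ≤ fcomp (S' i) X u v := by
  have e1 : famEq S S' ⊓ fcomp X (S' i) u v ≤ fcomp X (S i) u v :=
    le_trans (inf_le_inf_right _ (by rw [eqd_symm']; exact famEq_le_eqd S S' i))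
      (comp_right_mono' X (S' i) (S i) u v)
  have e2 : famEq S S' ⊓ fcomp (S i) X u v ≤ fcomp (S' i) X u v :=
    le_trans (inf_le_inf_right _ (famEq_le_eqd S S' i)) (comp_left_mono' X (S i) (S' i) u v)
  calc famEq S S' ⊓ d ⊓ fcomp X (S' i) u v
      ≤ famEq S S' ⊓ (d ⊓ (famEq S S' ⊓ fcomp X (S' i) u v)) := by
        refine le_inf (le_trans inf_le_left inf_le_left) (le_inf (le_trans inf_le_left inf_le_right) (le_inf (le_trans inf_le_left inf_le_left) inf_le_right))
    _ ≤ famEq S S' ⊓ (d ⊓ fcomp X (S i) u v) :=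
        inf_le_inf_left _ (inf_le_inf_left _ e1)
    _ ≤ famEq S S' ⊓ fcomp (S i) X u v := inf_le_inf_left _ (hd i u v)
    _ ≤ fcomp (S' i) X u v := e2

lemma key1 {I : Type*} (S S' : I → U → U → L) (X : U → U → L) :
    famEq S S' ⊓ SD1 S X ≤ SD1 S' X := by
  refine le_iInf fun i => le_iInf fun u => le_iInf fun v => ?_
  rw [le_himp_iff]
  exact key_gen S S' X (SD1 S X)
    (fun i u v => le_trans (inf_le_inf_right _ (iInf_le _ i)) (incl_inf_le _ _ u v)) i u v

lemma key2 {I : Type*} (S S' : I → U → U → L) (X : U → U → L) :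
    famEq S S' ⊓ SD2 S X ≤ SD2 S' X := by
  refine le_iInf fun i => le_iInf fun u => le_iInf fun v => ?_
  rw [le_himp_iff]
  -- SD2 : incl (fcomp (S i) X) (fcomp X (S i))
  have e1 : famEq S S' ⊓ fcomp (S' i) X u v ≤ fcomp (S i) X u v :=
    le_trans (inf_le_inf_right _ (by rw [eqd_symm']; exact famEq_le_eqd S S' i))
      (comp_left_mono' X (S' i) (S i) u v)
  have e2 : famEq S S' ⊓ fcomp X (S i) u v ≤ fcomp X (S' i) u v :=
    le_trans (inf_le_inf_right _ (famEq_le_eqd S S' i)) (comp_right_mono' X (S i) (S' i) u v)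
  have hd : SD2 S X ⊓ fcomp (S i) X u v ≤ fcomp X (S i) u v :=
    le_trans (inf_le_inf_right _ (iInf_le _ i)) (incl_inf_le _ _ u v)
  calc famEq S S' ⊓ SD2 S X ⊓ fcomp (S' i) X u v
      ≤ famEq S S' ⊓ (SD2 S X ⊓ (famEq S S' ⊓ fcomp (S' i) X u v)) := by
        refine le_inf (le_trans inf_le_left inf_le_left) (le_inf (le_trans inf_le_left inf_le_right) (le_inf (le_trans inf_le_left inf_le_left) inf_le_right))
    _ ≤ famEq S S' ⊓ (SD2 S X ⊓ fcomp (S i) X u v) :=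
        inf_le_inf_left _ (inf_le_inf_left _ e1)
    _ ≤ famEq S S' ⊓ fcomp X (S i) u v := inf_le_inf_left _ hd
    _ ≤ fcomp X (S' i) u v := e2

lemma key3 {I : Type*} (S S' : I → U → U → L) (X : U → U → L) :
    famEq S S' ⊓ SD3 S X ≤ SD3 S' X := by
  unfold SD3
  refine le_inf (le_trans ?_ (key1 S S' X)) (le_trans ?_ (key2 S S' X))
  · exact inf_le_inf_left _ inf_le_left
  · exact inf_le_inf_left _ inf_le_right

lemma famEq_symm' {I : Type*} (S S' : I → U → U → L) : famEq S S' = famEq S' S := by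
  unfold famEq; simp [eqd_symm']

lemma final_step {e a b : L} (hab : e ⊓ a ≤ b) (hba : e ⊓ b ≤ a) :
    (a < e → b = a) ∧ (e ≤ a → e ≤ b) := by
  constructor
  · intro h
    have h1 : a ≤ b := by rw [inf_eq_right.2 h.le] at hab; exact hab
    rcases lt_or_ge b e with hb | hb
    · rw [inf_eq_right.2 hb.le] at hba
      exact le_antisymm hba h1
    · exact absurd (le_trans (le_inf le_rfl hb) hba) (not_le.2 h)
  · intro h
    calc e = e ⊓ a := (inf_eq_left.2 h).symm
    _ ≤ b := hab

/-- Over a linearly ordered complete Heyting algebra, for each k ∈ {1,2,3}: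
(a) if SD_k(S)(X) < (S ≈ S') then SD_k(S')(X) = SD_k(S)(X);
(b) if SD_k(S)(X) ≥ (S ≈ S') then SD_k(S')(X) ≥ (S ≈ S'). -/
theorem stmt8 [Nonempty U] {I : Type*} (S S' : I → U → U → L) (X : U → U → L) :
    ((SD1 S X < famEq S S' → SD1 S' X = SD1 S X) ∧
      (famEq S S' ≤ SD1 S X → famEq S S' ≤ SD1 S' X)) ∧
    ((SD2 S X < famEq S S' → SD2 S' X = SD2 S X) ∧
      (famEq S S' ≤ SD2 S X → famEq S S' ≤ SD2 S' X)) ∧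
    ((SD3 S X < famEq S S' → SD3 S' X = SD3 S X) ∧
      (famEq S S' ≤ SD3 S X → famEq S S' ≤ SD3 S' X)) := by
  have h1' : famEq S S' ⊓ SD1 S' X ≤ SD1 S X := by
    rw [famEq_symm']; exact key1 S' S X
  have h2' : famEq S S' ⊓ SD2 S' X ≤ SD2 S X := by
    rw [famEq_symm']; exact key2 S' S X
  have h3' : famEq S S' ⊓ SD3 S' X ≤ SD3 S X := by
    rw [famEq_symm']; exact key3 S' S X
  exact ⟨final_step (key1 S S' X) h1', final_step (key2 S S' X) h2',
    final_step (key3 S S' X) h3'⟩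
end

section
/- Suppose L is additionally linearly ordered. Let S = (R_i)_{i∈I} and S' = (R'_i)_{i∈I} be two families of fuzzy relations on U indexed by the same set I, and let X, X' be fuzzy relations on U. Then for each k ∈ {1,2,3}: (a) if SD_k(S)(X) < (X ≈ X') ⊓ (S ≈ S') then SD_k(S')(X') = SD_k(S)(X); (b) if SD_k(S)(X) ≥ (X ≈ X') ⊓ (S ≈ S') then SD_k(S')(X') ≥ (X ≈ X') ⊓ (S ≈ S'). -/
open scoped symmDiff

/- L is a linearly ordered complete Heyting algebra, i.e. a complete linear order,
regarded as a complete residuated lattice with ⊗ = ⊓, residuum the Heyting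
implication ⇨, biresiduum ⇔ (`bihimp`), and top element as the unit 1. -/
variable {L : Type*} [CompleteLinearOrder L] {U : Type*}

/-
Equality degrees are compatible with the operations building the solution degrees:
(X ≈ X') ⊓ (R ≈ R') ≤ (X ∘ R ≈ X' ∘ R') and (A ≈ A') ⊓ (B ≈ B') ⊓ (A ≲ B) ≤ (A' ≲ B').
Hence, with e = (X ≈ X') ⊓ (S ≈ S'), every k satisfies e ⊓ SD_k(S)(X) ≤ SD_k(S')(X')
and, by symmetry of e, e ⊓ SD_k(S')(X') ≤ SD_k(S)(X). In a linear order these two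
inequalities say that SD_k(S)(X) and SD_k(S')(X') agree below e and are both at least e otherwise.
-/

lemma eqd_comm (R Q : U → U → L) : eqd R Q = eqd Q R := by
  simp only [eqd, bihimp_comm]

lemma eqd_le_bihimp (R Q : U → U → L) (u v : U) : eqd R Q ≤ R u v ⇔ Q u v :=
  (iInf_le _ u).trans (iInf_le _ v)

lemma incl_le_himp (R Q : U → U → L) (u v : U) : incl R Q ≤ R u v ⇨ Q u v :=
  (iInf_le _ u).trans (iInf_le _ v)

lemma inf_eqd_le (R Q : U → U → L) (u v : U) : R u v ⊓ eqd R Q ≤ Q u v :=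
  (inf_le_inf_left _ (eqd_le_bihimp R Q u v)).trans (le_bihimp_iff.1 le_rfl).2

lemma fcomp_inf_eqd_inf_eqd_le (X X' R R' : U → U → L) (u v : U) :
    fcomp X R u v ⊓ (eqd X X' ⊓ eqd R R') ≤ fcomp X' R' u v := by
  rw [fcomp, iSup_inf_eq]
  refine iSup_le fun w => le_iSup_of_le w (le_inf ?_ ?_)
  · exact (inf_le_inf inf_le_left inf_le_left).trans (inf_eqd_le X X' u w)
  · exact (inf_le_inf inf_le_right inf_le_right).trans (inf_eqd_le R R' w v)

lemma eqd_inf_eqd_le_eqd_fcomp (X X' R R' : U → U → L) :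
    eqd X X' ⊓ eqd R R' ≤ eqd (fcomp X R) (fcomp X' R') := by
  refine le_iInf₂ fun u v => le_bihimp ?_ (fcomp_inf_eqd_inf_eqd_le X X' R R' u v)
  rw [eqd_comm X, eqd_comm R]
  exact fcomp_inf_eqd_inf_eqd_le X' X R' R u v

lemma eqd_inf_eqd_inf_incl_le_incl (A A' B B' : U → U → L) :
    eqd A A' ⊓ eqd B B' ⊓ incl A B ≤ incl A' B' := by
  refine le_iInf₂ fun u v => le_himp_iff.2 ?_
  set c := eqd A A' ⊓ eqd B B' ⊓ incl A B
  have hA : A' u v ⊓ c ≤ A u v :=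
    (inf_le_inf_left _ (inf_le_left.trans inf_le_left)).trans
      (eqd_comm A A' ▸ inf_eqd_le A' A u v)
  have hAB : A u v ⊓ c ≤ B u v :=
    (inf_le_inf_left _ (inf_le_right.trans (incl_le_himp A B u v))).trans inf_himp_le
  have hB : B u v ⊓ c ≤ B' u v :=
    (inf_le_inf_left _ (inf_le_left.trans inf_le_right)).trans (inf_eqd_le B B' u v)
  calc c ⊓ A' u v = A' u v ⊓ c := inf_comm _ _
    _ ≤ A u v ⊓ c := le_inf hA inf_le_right
    _ ≤ B u v ⊓ c := le_inf hAB inf_le_right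
    _ ≤ B' u v := hB

section Families

variable {I : Type*}

lemma famEq_comm (S S' : I → U → U → L) : famEq S S' = famEq S' S := by
  simp only [famEq, eqd_comm]

lemma eqd_inf_famEq_le_eqd_fcomp_left (S S' : I → U → U → L) (X X' : U → U → L) (i : I) :
    eqd X X' ⊓ famEq S S' ≤ eqd (fcomp X (S i)) (fcomp X' (S' i)) :=
  (inf_le_inf_left _ (iInf_le _ i)).trans (eqd_inf_eqd_le_eqd_fcomp _ _ _ _)

lemma eqd_inf_famEq_le_eqd_fcomp_right (S S' : I → U → U → L) (X X' : U → U → L) (i : I) :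
    eqd X X' ⊓ famEq S S' ≤ eqd (fcomp (S i) X) (fcomp (S' i) X') :=
  (le_inf (inf_le_right.trans (iInf_le _ i)) inf_le_left).trans
    (eqd_inf_eqd_le_eqd_fcomp _ _ _ _)

lemma eqd_inf_famEq_inf_SD1_le (S S' : I → U → U → L) (X X' : U → U → L) :
    eqd X X' ⊓ famEq S S' ⊓ SD1 S X ≤ SD1 S' X' :=
  le_iInf fun i => (inf_le_inf (le_inf (eqd_inf_famEq_le_eqd_fcomp_left S S' X X' i)
    (eqd_inf_famEq_le_eqd_fcomp_right S S' X X' i)) (iInf_le _ i)).trans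
    (eqd_inf_eqd_inf_incl_le_incl _ _ _ _)

lemma eqd_inf_famEq_inf_SD2_le (S S' : I → U → U → L) (X X' : U → U → L) :
    eqd X X' ⊓ famEq S S' ⊓ SD2 S X ≤ SD2 S' X' :=
  le_iInf fun i => (inf_le_inf (le_inf (eqd_inf_famEq_le_eqd_fcomp_right S S' X X' i)
    (eqd_inf_famEq_le_eqd_fcomp_left S S' X X' i)) (iInf_le _ i)).trans
    (eqd_inf_eqd_inf_incl_le_incl _ _ _ _)

lemma eqd_inf_famEq_inf_SD3_le (S S' : I → U → U → L) (X X' : U → U → L) :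
    eqd X X' ⊓ famEq S S' ⊓ SD3 S X ≤ SD3 S' X' :=
  le_inf ((inf_le_inf_left _ inf_le_left).trans (eqd_inf_famEq_inf_SD1_le S S' X X'))
    ((inf_le_inf_left _ inf_le_right).trans (eqd_inf_famEq_inf_SD2_le S S' X X'))

end Families

lemma eq_of_lt_of_inf_le_of_inf_le {α : Type*} [LinearOrder α] {e a b : α} (hlt : a < e)
    (hab : e ⊓ a ≤ b) (hba : e ⊓ b ≤ a) : b = a := by
  have hb : b < e := lt_of_not_ge fun heb => hlt.not_ge ((le_inf le_rfl heb).trans hba)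
  exact le_antisymm ((le_inf hb.le le_rfl).trans hba) ((le_inf hlt.le le_rfl).trans hab)

theorem stmt10_general {I : Type*} (S S' : I → U → U → L) (X X' : U → U → L) :
    ((SD1 S X < eqd X X' ⊓ famEq S S' → SD1 S' X' = SD1 S X) ∧
      (eqd X X' ⊓ famEq S S' ≤ SD1 S X → eqd X X' ⊓ famEq S S' ≤ SD1 S' X')) ∧
    ((SD2 S X < eqd X X' ⊓ famEq S S' → SD2 S' X' = SD2 S X) ∧
      (eqd X X' ⊓ famEq S S' ≤ SD2 S X → eqd X X' ⊓ famEq S S' ≤ SD2 S' X')) ∧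
    ((SD3 S X < eqd X X' ⊓ famEq S S' → SD3 S' X' = SD3 S X) ∧
      (eqd X X' ⊓ famEq S S' ≤ SD3 S X → eqd X X' ⊓ famEq S S' ≤ SD3 S' X')) := by
  set e := eqd X X' ⊓ famEq S S'
  have he : eqd X' X ⊓ famEq S' S = e := by rw [eqd_comm, famEq_comm]
  have transfer {a b : L} (hab : e ⊓ a ≤ b) (hba : e ⊓ b ≤ a) :
      (a < e → b = a) ∧ (e ≤ a → e ≤ b) :=
    ⟨fun hlt => eq_of_lt_of_inf_le_of_inf_le hlt hab hba,
      fun hle => (le_inf le_rfl hle).trans hab⟩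
  exact
    ⟨transfer (eqd_inf_famEq_inf_SD1_le S S' X X') (he ▸ eqd_inf_famEq_inf_SD1_le S' S X' X),
      transfer (eqd_inf_famEq_inf_SD2_le S S' X X') (he ▸ eqd_inf_famEq_inf_SD2_le S' S X' X),
      transfer (eqd_inf_famEq_inf_SD3_le S S' X X') (he ▸ eqd_inf_famEq_inf_SD3_le S' S X' X)⟩

/-- Over a linearly ordered complete Heyting algebra, for each k ∈ {1,2,3}:
(a) if SD_k(S)(X) < (X ≈ X') ⊓ (S ≈ S') then SD_k(S')(X') = SD_k(S)(X);
(b) if SD_k(S)(X) ≥ (X ≈ X') ⊓ (S ≈ S') then SD_k(S')(X') ≥ (X ≈ X') ⊓ (S ≈ S'). -/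
theorem stmt10 [Nonempty U] {I : Type*} (S S' : I → U → U → L) (X X' : U → U → L) :
    ((SD1 S X < eqd X X' ⊓ famEq S S' → SD1 S' X' = SD1 S X) ∧
      (eqd X X' ⊓ famEq S S' ≤ SD1 S X → eqd X X' ⊓ famEq S S' ≤ SD1 S' X')) ∧
    ((SD2 S X < eqd X X' ⊓ famEq S S' → SD2 S' X' = SD2 S X) ∧
      (eqd X X' ⊓ famEq S S' ≤ SD2 S X → eqd X X' ⊓ famEq S S' ≤ SD2 S' X')) ∧
    ((SD3 S X < eqd X X' ⊓ famEq S S' → SD3 S' X' = SD3 S X) ∧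
      (eqd X X' ⊓ famEq S S' ≤ SD3 S X → eqd X X' ⊓ famEq S S' ≤ SD3 S' X')) :=
  stmt10_general S S' X X'
end
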